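/- The semidirect product ℤ ⋉_φ F₂, where F₂ = ⟨a,b⟩ is free of rank 2 and the generator of ℤ acts by φ(a) = b⁻¹, φ(b) = ab, is isomorphic to the trefoil knot group ⟨x,y | x²=y³⟩. -/

import Mathlib

/-!
Both groups are presentations of the one-relator group `⟨a, s | s a s = a s² a⟩`.
In `F₂ ⋊_φ ℤ` with stable letter `t`, the relation `t a t⁻¹ = b⁻¹` eliminates `b = t a⁻¹ t⁻¹`,
after which `t b t⁻¹ = a b` becomes `s a s = a s² a` for `s = t⁻¹`. In `⟨x, y | x² = y³⟩` put
`s = y⁻¹ x` and `a = s⁻¹ y s⁻¹`, so that `y = s a s` and `x = s a s²`; then `x² = y³` is again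
equivalent to `s a s = a s² a`.
-/

open FreeGroup

section OneRelator

variable {G : Type*} [Group G] {a b s t : G}

theorem mul_mul_eq_iff_sq_eq_cube :
    s * a * s = a * s * s * a ↔ (s * a * s * s) ^ 2 = (s * a * s) ^ 3 := by
  have e₁ : (s * a * s * s) ^ 2 = s * a * s * (s * (s * a * s) * s) := by rw [sq]; group
  have e₂ : (s * a * s) ^ 3 = s * a * s * (s * (a * s * s * a) * s) := by rw [pow_three']; group
  rw [e₁, e₂, mul_right_inj, mul_left_inj, mul_right_inj]

theorem conj_eq_mul_iff (h : t * a * t⁻¹ = b⁻¹) :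
    t * b * t⁻¹ = a * b ↔ t⁻¹ * a * t⁻¹ = a * t⁻¹ * t⁻¹ * a := by
  obtain rfl : b = t * a⁻¹ * t⁻¹ := by rw [← inv_inv b, ← h]; group
  rw [← mul_inv_eq_one, ← mul_inv_eq_one (a := t⁻¹ * a * t⁻¹),
    ← conj_eq_one_iff (a := (t ^ 2 * a⁻¹)⁻¹)]
  convert Iff.rfl using 2
  group

end OneRelator

theorem MonoidHom.comp_zpow_eq_conj {N H : Type*} [Group N] [Group H] (f : N →* H)
    {φ : MulAut N} {h : H} (hf : f.comp φ.toMonoidHom = (MulAut.conj h).toMonoidHom.comp f)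
    (k : ℤ) : f.comp (φ ^ k).toMonoidHom = (MulAut.conj (h ^ k)).toMonoidHom.comp f := by
  simp only [DFunLike.ext_iff, coe_comp, MulEquiv.coe_toMonoidHom, Function.comp_apply,
    MulAut.conj_apply] at hf ⊢
  induction k using Int.induction_on with
  | zero => simp
  | succ k ih => intro n; rw [zpow_add_one, MulAut.mul_apply, ih, hf, zpow_add_one]; group
  | pred k ih =>
    intro n
    have hφ := hf (φ⁻¹ n)
    rw [MulAut.apply_inv_self] at hφ
    rw [zpow_sub_one, MulAut.mul_apply, ih, zpow_sub_one, hφ]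
    group

abbrev MappingTorus {N : Type*} [Group N] (φ : MulAut N) : Type _ :=
  N ⋊[zpowersHom (MulAut N) φ] Multiplicative ℤ

namespace MappingTorus

open SemidirectProduct

variable {N H : Type*} [Group N] [Group H] {φ : MulAut N}

def t : MappingTorus φ := inr (.ofAdd 1)

theorem t_mul_inl_mul_t_inv (n : N) : t * inl n * t⁻¹ = (inl (φ n) : MappingTorus φ) := by
  rw [t, ← _root_.map_inv, ← inl_aut]; simp

def lift (f : N →* H) (h : H) (hf : f.comp φ.toMonoidHom = (MulAut.conj h).toMonoidHom.comp f) :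
    MappingTorus φ →* H :=
  SemidirectProduct.lift f (zpowersHom H h) fun k => by
    simpa [← map_zpow] using f.comp_zpow_eq_conj hf k.toAdd

variable {f : N →* H} {h : H} {hf : f.comp φ.toMonoidHom = (MulAut.conj h).toMonoidHom.comp f}

@[simp]
theorem lift_inl (n : N) : lift f h hf (inl n) = f n := SemidirectProduct.lift_inl ..

@[simp]
theorem lift_t : lift f h hf t = h := by simp [lift, t]

theorem hom_ext {f g : MappingTorus φ →* H} (hl : f.comp inl = g.comp inl) (ht : f t = g t) :
    f = g :=
  SemidirectProduct.hom_ext hl (MonoidHom.ext_mint ht)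

end MappingTorus

abbrev TrefoilGroup : Type :=
  PresentedGroup ({of false ^ 2 * (of true ^ 3)⁻¹} : Set (FreeGroup Bool))

namespace TrefoilGroup

def x : TrefoilGroup := PresentedGroup.of false

def y : TrefoilGroup := PresentedGroup.of true

theorem x_sq_eq_y_cube : x ^ 2 = y ^ 3 := by
  rw [← mul_inv_eq_one]
  exact PresentedGroup.one_of_mem rfl

variable {H : Type*} [Group H]

def lift {u v : H} (h : u ^ 2 = v ^ 3) : TrefoilGroup →* H :=
  PresentedGroup.toGroup (f := fun i => cond i v u) <| by
    rintro _ rfl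
    simpa [mul_inv_eq_one] using h

@[simp]
theorem lift_x {u v : H} (h : u ^ 2 = v ^ 3) : lift h x = u := PresentedGroup.toGroup.of _

@[simp]
theorem lift_y {u v : H} (h : u ^ 2 = v ^ 3) : lift h y = v := PresentedGroup.toGroup.of _

theorem hom_ext {f g : TrefoilGroup →* H} (hx : f x = g x) (hy : f y = g y) : f = g :=
  PresentedGroup.ext fun | false => hx | true => hy

def t : TrefoilGroup := x⁻¹ * y

def a : TrefoilGroup := t * y * t

def b : TrefoilGroup := t * a⁻¹ * t⁻¹

theorem t_inv_mul_a_mul_t_inv : t⁻¹ * a * t⁻¹ = y := by rw [a]; group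

theorem t_inv_mul_a_mul_t_inv_mul_t_inv : t⁻¹ * a * t⁻¹ * t⁻¹ = x := by
  rw [t_inv_mul_a_mul_t_inv, t]; group

theorem t_mul_a_mul_t_inv : t * a * t⁻¹ = b⁻¹ := by rw [b]; group

theorem t_mul_b_mul_t_inv : t * b * t⁻¹ = a * b :=
  (conj_eq_mul_iff t_mul_a_mul_t_inv).2 <| mul_mul_eq_iff_sq_eq_cube.2 <| by
    rw [t_inv_mul_a_mul_t_inv_mul_t_inv, t_inv_mul_a_mul_t_inv, x_sq_eq_y_cube]

end TrefoilGroup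

open MappingTorus in
/-- The semidirect product `F₂ ⋊_φ ℤ`, where `F₂ = ⟨a,b⟩` is free of rank 2
(`a = of false`, `b = of true`) and the generator of `ℤ` acts by the automorphism
`φ : a ↦ b⁻¹, b ↦ ab`, is isomorphic to the trefoil knot group `⟨x,y | x² = y³⟩`. -/
theorem stmt_10 (φ : MulAut (FreeGroup Bool))
    (ha : φ (of false) = (of true)⁻¹)
    (hb : φ (of true) = of false * of true) :
    Nonempty
      ((FreeGroup Bool) ⋊[(zpowersHom (MulAut (FreeGroup Bool)) φ :
            Multiplicative ℤ →* MulAut (FreeGroup Bool))] Multiplicative ℤ ≃*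
        PresentedGroup ({of false ^ 2 * (of true ^ 3)⁻¹} : Set (FreeGroup Bool))) := by
  have hta : t * .inl (of false) * t⁻¹ = (.inl (of true) : MappingTorus φ)⁻¹ := by
    rw [t_mul_inl_mul_t_inv, ha, _root_.map_inv]
  have htb : t * .inl (of true) * t⁻¹ = (.inl (of false) * .inl (of true) : MappingTorus φ) := by
    rw [t_mul_inl_mul_t_inv, hb, _root_.map_mul]
  let toT : MappingTorus φ →* TrefoilGroup :=
    MappingTorus.lift (FreeGroup.lift (cond · TrefoilGroup.b TrefoilGroup.a)) TrefoilGroup.t <|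
      FreeGroup.ext_hom _ _ fun
        | false => by simp [ha, ← TrefoilGroup.t_mul_a_mul_t_inv]
        | true => by simp [hb, TrefoilGroup.t_mul_b_mul_t_inv]
  let ofT := TrefoilGroup.lift <| mul_mul_eq_iff_sq_eq_cube.1 <| (conj_eq_mul_iff hta).1 htb
  have hofT_t : ofT TrefoilGroup.t = t := by simp [ofT, TrefoilGroup.t]; group
  have hofT_a : ofT TrefoilGroup.a = .inl (of false) := by simp [ofT, TrefoilGroup.a, hofT_t]; group
  refine ⟨toT.toMulEquiv ofT ?_ ?_⟩
  · refine hom_ext (FreeGroup.ext_hom _ _ fun | false => ?_ | true => ?_) ?_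
    · simpa [toT] using hofT_a
    · simpa [toT, TrefoilGroup.b, hofT_a, hofT_t, mul_assoc] using congrArg (·⁻¹) hta
    · simpa [toT] using hofT_t
  · refine TrefoilGroup.hom_ext ?_ ?_
    · simpa [ofT, toT] using TrefoilGroup.t_inv_mul_a_mul_t_inv_mul_t_inv
    · simpa [ofT, toT] using TrefoilGroup.t_inv_mul_a_mul_t_inv
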